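/- arXiv:2308.09587 — 7 statements merged into one kernel-verified Lean document; each statement's English description precedes it below -/
import Mathlib

section
/- Let A be a finite-dimensional algebra over an algebraically closed field K and let V₁,…,V_n ∈ mod(A) satisfy: (i) End_A(V_i) ≅ K[δ]/(δ^{m_i}) for some m_i ≥ 1; (ii) Hom_A(V_i, V_j) = 0 for i ≠ j; (iii) the direct sum V = V₁ ⊕ ⋯ ⊕ V_n satisfies τ_A(V) ≅ V. Then each V_i is semistable with respect to the weight θ = ⟨g(V), −⟩, i.e. θ(V_i) = 0 and θ(U) ≤ 0 for all submodules U ⊆ V_i; moreover V_i is θ-stable (θ(U) < 0 for all proper nonzero submodules U) whenever m_i = 1. -/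
universe u

open Module

/-!
Since τV ≅ V and the V_j are Hom-orthogonal, for U ⊆ V_i we get
θ(U) = dim Hom(V_i, U) − dim Hom(U, V), and Hom(U, V) contains Hom(U, V_i), with equality when
U = V_i. The algebra End(V_i) ≅ K[δ]/(δ^m) is Frobenius: if φ(δ^(m-1)) ≠ 0, then φ vanishes on no
nonzero left ideal. Indeed, multiplying a nonzero g by δ^(m-1-j₀), where j₀ is the lowest degree
occurring in g, gives a nonzero multiple of δ^(m-1). Hence (f, g) ↦ φ(g ∘ f) pairs Hom(V_i, U)
nondegenerately against Hom(U, V_i), so dim Hom(V_i, U) ≤ dim Hom(U, V_i) and θ(U) ≤ 0. If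
End(V_i) = K, then ι ∘ f is a scalar for every f : V_i → U, hence zero when U is proper. Since the
inclusion ι is a nonzero map U → V_i, this gives θ(U) < 0.
-/

section Frobenius

variable {K E : Type*} [Field K] [Ring E] [Algebra K E]

theorem exists_mul_eq_smul_pow_pred {δ : E} {m : ℕ} (hnil : δ ^ m = 0)
    (hspan : ∀ g : E, ∃ c : Fin m → K, g = ∑ j, c j • δ ^ (j : ℕ)) {g : E} (hg : g ≠ 0) :
    ∃ (h : E) (a : K), a ≠ 0 ∧ h * g = a • δ ^ (m - 1) := by
  obtain ⟨c, rfl⟩ := hspan g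
  obtain ⟨j₁, hj₁⟩ : ∃ j, c j ≠ 0 := by
    by_contra! h
    exact hg (by simp [h])
  obtain ⟨j₀, hj₀, hmin⟩ := wellFounded_lt.has_min {j | c j ≠ 0} ⟨j₁, hj₁⟩
  refine ⟨δ ^ (m - 1 - j₀), c j₀, hj₀, ?_⟩
  rw [Finset.mul_sum, Finset.sum_eq_single j₀ ?_ (by simp), mul_smul_comm, ← pow_add,
    Nat.sub_add_cancel (by omega)]
  intro j _ hj
  rcases hj.lt_or_gt with hlt | hgt
  · rw [show c j = 0 by by_contra h; exact hmin j h hlt, zero_smul, mul_zero]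
  · rw [mul_smul_comm, ← pow_add, pow_eq_zero_of_le (by omega) hnil, smul_zero]

theorem exists_dual_mul_ne_zero {δ : E} {m : ℕ} (hnil : δ ^ m = 0) (hnz : δ ^ (m - 1) ≠ 0)
    (hspan : ∀ g : E, ∃ c : Fin m → K, g = ∑ j, c j • δ ^ (j : ℕ)) :
    ∃ φ : Dual K E, ∀ g ≠ 0, ∃ h, φ (h * g) ≠ 0 := by
  obtain ⟨φ, hφ⟩ : ∃ φ : Dual K E, φ (δ ^ (m - 1)) ≠ 0 := by
    by_contra! h
    exact hnz ((forall_dual_apply_eq_zero_iff K _).mp h)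
  refine ⟨φ, fun g hg => ?_⟩
  obtain ⟨h, a, ha, hhg⟩ := exists_mul_eq_smul_pow_pred hnil hspan hg
  exact ⟨h, by simpa [hhg] using ⟨ha, hφ⟩⟩

end Frobenius

section HomSpaces

variable {K A : Type*} [Field K] [Ring A] [Algebra K A]
  {M N P : Type*} [AddCommGroup M] [Module A M]
  [AddCommGroup N] [Module A N] [Module K N] [IsScalarTower K A N] [SMulCommClass A K N]
  [AddCommGroup P] [Module A P] [Module K P] [IsScalarTower K A P] [SMulCommClass A K P]

instance Module.Finite.linearMap_of_isScalarTower [Module K M] [IsScalarTower K A M]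
    [Module.Finite K M] [Module.Finite K N] :
    Module.Finite K (M →ₗ[A] N) :=
  .of_injective (LinearMap.restrictScalarsₗ K A M N K) (LinearMap.restrictScalars_injective K)

theorem finrank_linearMap_congr_right (e : N ≃ₗ[A] P) :
    finrank K (M →ₗ[A] N) = finrank K (M →ₗ[A] P) :=
  LinearEquiv.finrank_eq <| .ofBijective (LinearMap.compRight K e.toLinearMap)
    ⟨e.injective.injective_linearMapComp_left,
      fun g => ⟨e.symm.toLinearMap ∘ₗ g, by ext; simp⟩⟩

theorem finrank_linearMap_le_swap_of_injective [Module K M] [IsScalarTower K A M]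
    [SMulCommClass A K M] [Module.Finite K M] [Module.Finite K N] {δ : Module.End A M} {m : ℕ}
    (hnil : δ ^ m = 0) (hnz : δ ^ (m - 1) ≠ 0)
    (hspan : ∀ g : Module.End A M, ∃ c : Fin m → K, g = ∑ j, c j • δ ^ (j : ℕ))
    {ι : N →ₗ[A] M} (hι : Function.Injective ι) :
    finrank K (M →ₗ[A] N) ≤ finrank K (N →ₗ[A] M) := by
  obtain ⟨φ, hφ⟩ := exists_dual_mul_ne_zero hnil hnz hspan
  let pairing : (M →ₗ[A] N) →ₗ[K] Dual K (N →ₗ[A] M) :=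
    LinearMap.mk₂ K (fun f g => φ (g ∘ₗ f))
      (fun f₁ f₂ g => by rw [LinearMap.comp_add, map_add])
      (fun c f g => by rw [LinearMap.comp_smul, map_smul, smul_eq_mul])
      (fun f g₁ g₂ => by rw [LinearMap.add_comp, map_add])
      (fun c f g => by rw [LinearMap.smul_comp, map_smul, smul_eq_mul])
  have hpairing : Function.Injective pairing := by
    rw [← LinearMap.ker_eq_bot, LinearMap.ker_eq_bot']
    intro f hf
    by_contra hf0
    obtain ⟨h, hh⟩ := hφ (ι ∘ₗ f) fun h0 =>
      hf0 (hι.injective_linearMapComp_left (h0.trans ι.comp_zero.symm))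
    exact hh (LinearMap.congr_fun hf (h ∘ₗ ι))
  calc finrank K (M →ₗ[A] N) ≤ finrank K (Dual K (N →ₗ[A] M)) :=
        LinearMap.finrank_le_finrank_of_injective hpairing
    _ = finrank K (N →ₗ[A] M) := Subspace.dual_finrank_eq

theorem finrank_linearMap_le_of_injective_right [Module K M] [IsScalarTower K A M]
    [Module.Finite K M] [Module.Finite K P] {g : N →ₗ[A] P} (hg : Function.Injective g) :
    finrank K (M →ₗ[A] N) ≤ finrank K (M →ₗ[A] P) :=
  LinearMap.finrank_le_finrank_of_injective (f := LinearMap.compRight K g)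
    hg.injective_linearMapComp_left

end HomSpaces

theorem linearMap_eq_zero_of_not_surjective {K A M N : Type*} [Field K] [Ring A] [Algebra K A]
    [AddCommGroup M] [Module A M] [Module K M] [IsScalarTower K A M] [SMulCommClass A K M]
    [AddCommGroup N] [Module A N] (hscalar : ∀ g : Module.End A M, ∃ c : K, g = c • 1)
    {ι : N →ₗ[A] M} (hι : Function.Injective ι) (hns : ¬ Function.Surjective ι)
    (f : M →ₗ[A] N) : f = 0 := by
  obtain ⟨c, hc⟩ := hscalar (ι ∘ₗ f)
  obtain rfl | hc0 := eq_or_ne c 0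
  · exact hι.injective_linearMapComp_left (by simpa using hc)
  · refine absurd (fun y => ⟨f (c⁻¹ • y), ?_⟩) hns
    rw [← LinearMap.comp_apply, hc, LinearMap.smul_apply, Module.End.one_apply,
      smul_inv_smul₀ hc0]

section Orthogonal

variable {K A : Type*} [Field K] [Ring A]
  {I : Type*} [DecidableEq I] {V : I → Type*}
  [∀ i, AddCommGroup (V i)] [∀ i, Module A (V i)]
  {U : Type*} [AddCommGroup U] [Module A U]

theorem finrank_pi_linearMap_eq [Finite I] [Module K U] [SMulCommClass A K U] (i : I)
    (hU : ∀ j ≠ i, ∀ f : V j →ₗ[A] U, f = 0) :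
    finrank K ((∀ j, V j) →ₗ[A] U) = finrank K (V i →ₗ[A] U) :=
  LinearEquiv.finrank_eq <| .ofBijective (LinearMap.lcomp K U (LinearMap.single A V i))
    ⟨fun f₁ f₂ h => LinearMap.pi_ext' fun j => by
        obtain rfl | hj := eq_or_ne j i
        · exact h
        · rw [hU j hj (f₁ ∘ₗ _), hU j hj (f₂ ∘ₗ _)],
      fun g => ⟨g ∘ₗ LinearMap.proj i, by ext; simp⟩⟩

theorem finrank_linearMap_pi_eq [Algebra K A] [∀ i, Module K (V i)]
    [∀ i, IsScalarTower K A (V i)] [∀ i, SMulCommClass A K (V i)] (i : I)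
    (hU : ∀ j ≠ i, ∀ f : U →ₗ[A] V j, f = 0) :
    finrank K (U →ₗ[A] ∀ j, V j) = finrank K (U →ₗ[A] V i) :=
  LinearEquiv.finrank_eq <| .ofBijective (LinearMap.compRight K (LinearMap.proj i))
    ⟨fun f₁ f₂ h => LinearMap.ext fun x => funext fun j => by
        obtain rfl | hj := eq_or_ne j i
        · exact LinearMap.congr_fun h x
        · exact (LinearMap.congr_fun (hU j hj (LinearMap.proj j ∘ₗ f₁)) x).trans
            (LinearMap.congr_fun (hU j hj (LinearMap.proj j ∘ₗ f₂)) x).symm,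
      fun g => ⟨LinearMap.single A V i ∘ₗ g, by ext; simp⟩⟩

end Orthogonal

theorem stmt_4_general (K : Type u) [Field K]
    (A : Type u) [Ring A] [Algebra K A]
    (nn : ℕ) (V : Fin nn → Type u)
    [∀ i, AddCommGroup (V i)] [∀ i, Module A (V i)] [∀ i, Module K (V i)]
    [∀ i, IsScalarTower K A (V i)] [∀ i, SMulCommClass A K (V i)]
    [∀ i, Module.Finite K (V i)]
    (m : Fin nn → ℕ)
    -- (i): End_A(V_i) ≅ K[δ]/(δ^{m_i})
    (δ : ∀ i, Module.End A (V i))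
    (hnil : ∀ i, δ i ^ m i = 0)
    (hnz : ∀ i, δ i ^ (m i - 1) ≠ 0)
    (hgen : ∀ i (f : Module.End A (V i)), ∃ c : Fin (m i) → K,
        f = ∑ j : Fin (m i), c j • δ i ^ (j : ℕ))
    -- (ii): Hom-orthogonality
    (horth : ∀ i j, i ≠ j → ∀ f : V i →ₗ[A] V j, f = 0)
    -- (iii): τ_A(V) ≅ V; W stands for τ_A(V)
    (W : Type u) [AddCommGroup W] [Module A W] [Module K W]
    [IsScalarTower K A W] [SMulCommClass A K W]
    (hτ : Nonempty (W ≃ₗ[A] ((i : Fin nn) → V i))) :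
    ∀ i : Fin nn,
      -- θ(V_i) = 0
      ((finrank K (((j : Fin nn) → V j) →ₗ[A] V i) : ℤ)
          - (finrank K ((V i) →ₗ[A] W) : ℤ) = 0)
      -- θ(U) ≤ 0 for every submodule U ⊆ V_i
      ∧ (∀ (U : Type u) [AddCommGroup U] [Module A U] [Module K U]
            [IsScalarTower K A U] [SMulCommClass A K U] [Module.Finite K U]
            (ιU : U →ₗ[A] V i), Function.Injective ιU →
          (finrank K (((j : Fin nn) → V j) →ₗ[A] U) : ℤ)
            - (finrank K (U →ₗ[A] W) : ℤ) ≤ 0)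
      -- θ(U) < 0 for proper nonzero submodules, when m_i = 1
      ∧ (m i = 1 → ∀ (U : Type u) [AddCommGroup U] [Module A U] [Module K U]
            [IsScalarTower K A U] [SMulCommClass A K U] [Module.Finite K U]
            (ιU : U →ₗ[A] V i), Function.Injective ιU →
          ¬ Function.Surjective ιU → (∃ u : U, u ≠ 0) →
          (finrank K (((j : Fin nn) → V j) →ₗ[A] U) : ℤ)
            - (finrank K (U →ₗ[A] W) : ℤ) < 0) := by
  obtain ⟨e⟩ := hτ
  intro i
  have horth_sub : ∀ {U : Type u} [AddCommGroup U] [Module A U] (ι : U →ₗ[A] V i),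
      Function.Injective ι → ∀ j ≠ i, ∀ f : V j →ₗ[A] U, f = 0 := fun ι hι j hj f =>
    hι.injective_linearMapComp_left ((horth j i hj _).trans ι.comp_zero.symm)
  have hsingle : Function.Injective (LinearMap.single A V i) := Pi.single_injective i
  refine ⟨?_, fun U _ _ _ _ _ _ ι hι => ?_, fun hm1 U _ _ _ _ _ _ ι hι hns ⟨u, hu⟩ => ?_⟩
  · rw [finrank_pi_linearMap_eq i (horth_sub LinearMap.id fun _ _ h => h),
      finrank_linearMap_congr_right e, finrank_linearMap_pi_eq i fun j hj => horth i j hj.symm,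
      sub_self]
  · rw [finrank_pi_linearMap_eq i (horth_sub ι hι), finrank_linearMap_congr_right e]
    have := (finrank_linearMap_le_swap_of_injective (hnil i) (hnz i) (hgen i) hι).trans
      (finrank_linearMap_le_of_injective_right hsingle)
    omega
  · have hscalar : ∀ g : Module.End A (V i), ∃ c : K, g = c • 1 := fun g => by
      obtain ⟨c, hc⟩ := hm1 ▸ hgen i g
      exact ⟨c 0, by simpa using hc⟩
    have : Subsingleton (V i →ₗ[A] U) :=
      subsingleton_of_forall_eq 0 (linearMap_eq_zero_of_not_surjective hscalar hι hns)
    have : Nontrivial (U →ₗ[A] V i) :=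
      nontrivial_of_ne ι 0 fun h => hu (hι (by simp [h]))
    have := finrank_pos.trans_le
      (finrank_linearMap_le_of_injective_right (K := K) (M := U) hsingle)
    rw [finrank_pi_linearMap_eq i (horth_sub ι hι), finrank_linearMap_congr_right e,
      finrank_zero_of_subsingleton]
    omega

/-- Let A be a finite-dimensional algebra over an algebraically closed
field K and V₁,…,V_n ∈ mod(A) with (i) End_A(V_i) ≅ K[δ]/(δ^{m_i}); (ii)
Hom_A(V_i,V_j) = 0 for i ≠ j; (iii) τ_A(V) ≅ V for V = V₁ ⊕ ⋯ ⊕ V_n (the module W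
below is τ_A(V), and by the Auslander–Reiten formula the weight θ = ⟨g(V),−⟩ is
θ(U) = dim Hom_A(V,U) − dim Hom_A(U,τ_A(V)) = dim Hom_A(V,U) − dim Hom_A(U,W)).
Then each V_i is θ-semistable (θ(V_i) = 0 and θ(U) ≤ 0 for every submodule U of V_i,
submodules being represented by injective A-linear maps U → V_i), and θ-stable
(θ(U) < 0 for proper nonzero U) whenever m_i = 1. -/
theorem stmt_4 (K : Type u) [Field K] [IsAlgClosed K]
    (A : Type u) [Ring A] [Algebra K A] [FiniteDimensional K A]
    (nn : ℕ) (V : Fin nn → Type u)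
    [∀ i, AddCommGroup (V i)] [∀ i, Module A (V i)] [∀ i, Module K (V i)]
    [∀ i, IsScalarTower K A (V i)] [∀ i, SMulCommClass A K (V i)]
    [∀ i, Module.Finite K (V i)]
    (m : Fin nn → ℕ) (hm : ∀ i, 1 ≤ m i)
    -- (i): End_A(V_i) ≅ K[δ]/(δ^{m_i})
    (δ : ∀ i, Module.End A (V i))
    (hnil : ∀ i, δ i ^ m i = 0)
    (hnz : ∀ i, δ i ^ (m i - 1) ≠ 0)
    (hgen : ∀ i (f : Module.End A (V i)), ∃ c : Fin (m i) → K,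
        f = ∑ j : Fin (m i), c j • δ i ^ (j : ℕ))
    -- (ii): Hom-orthogonality
    (horth : ∀ i j, i ≠ j → ∀ f : V i →ₗ[A] V j, f = 0)
    -- (iii): τ_A(V) ≅ V; W stands for τ_A(V)
    (W : Type u) [AddCommGroup W] [Module A W] [Module K W]
    [IsScalarTower K A W] [SMulCommClass A K W] [Module.Finite K W]
    (hτ : Nonempty (W ≃ₗ[A] ((i : Fin nn) → V i))) :
    ∀ i : Fin nn,
      -- θ(V_i) = 0
      ((finrank K (((j : Fin nn) → V j) →ₗ[A] V i) : ℤ)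
          - (finrank K ((V i) →ₗ[A] W) : ℤ) = 0)
      -- θ(U) ≤ 0 for every submodule U ⊆ V_i
      ∧ (∀ (U : Type u) [AddCommGroup U] [Module A U] [Module K U]
            [IsScalarTower K A U] [SMulCommClass A K U] [Module.Finite K U]
            (ιU : U →ₗ[A] V i), Function.Injective ιU →
          (finrank K (((j : Fin nn) → V j) →ₗ[A] U) : ℤ)
            - (finrank K (U →ₗ[A] W) : ℤ) ≤ 0)
      -- θ(U) < 0 for proper nonzero submodules, when m_i = 1
      ∧ (m i = 1 → ∀ (U : Type u) [AddCommGroup U] [Module A U] [Module K U]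
            [IsScalarTower K A U] [SMulCommClass A K U] [Module.Finite K U]
            (ιU : U →ₗ[A] V i), Function.Injective ιU →
          ¬ Function.Surjective ιU → (∃ u : U, u ≠ 0) →
          (finrank K (((j : Fin nn) → V j) →ₗ[A] U) : ℤ)
            - (finrank K (U →ₗ[A] W) : ℤ) < 0) :=
  stmt_4_general K A nn V m δ hnil hnz hgen horth W hτ
end

section
/- Let Γ be a valued quiver of affine type ℬ𝒞̃₁, i.e. H = KQ/I with Q the quiver having vertices 1,2, an arrow α: 2 → 1, a loop ε at 1, and I = (ε⁴). For λ = (λ₁ : λ₂) ∈ ℙ¹, let V_λ be the representation with V(2) = K², V(1) = K⁴, V(ε) the nilpotent Jordan block of size 4, and V(α) the 4×2 matrix with columns (1,0,0,0)ᵗ and (0,λ₂,λ₁,0)ᵗ. Then for λ, μ ∈ ℙ¹: V_λ ≅ V_μ if and only if λ = ±μ. -/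
noncomputable section

open Matrix

variable (K : Type*) [Field K]

/-- The ε-action on V_λ(1) = K⁴ : the nilpotent Jordan block of size 4. -/
def J4 : Matrix (Fin 4) (Fin 4) K := !![0,0,0,0; 1,0,0,0; 0,1,0,0; 0,0,1,0]

/-- The α-action of V_λ : the 4×2 matrix with columns (1,0,0,0)ᵗ and (0,λ₂,λ₁,0)ᵗ,
for λ = (v 0 : v 1) ∈ ℙ¹. -/
def Aα (v : Fin 2 → K) : Matrix (Fin 4) (Fin 2) K := !![1, 0; 0, v 1; 0, v 0; 0, 0]

/-- Isomorphism of the representations V_λ, V_μ of H = KQ/(ε⁴) of type 𝔹ℂ̃₁: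
a pair of invertible linear maps commuting with the actions of ε and α. -/
def RepIsoBC1 (v w : Fin 2 → K) : Prop :=
  ∃ (P : Matrix (Fin 4) (Fin 4) K) (Q : Matrix (Fin 2) (Fin 2) K),
    IsUnit P ∧ IsUnit Q ∧ P * J4 K = J4 K * P ∧ P * Aα K v = Aα K w * Q

/-!
A matrix commuting with the nilpotent Jordan block `J4` is lower triangular Toeplitz. Substituting
this into `P * Aα v = Aα w * Q` reduces an isomorphism to three scalars `a = Q 0 0`, `s = Q 1 1`,
`q = Q 1 0` with `a, s ≠ 0`, `v₁ a = w₁ s`, `w₁ v₁ q + v₀ a = w₀ s` and `q (w₀ v₁ + w₁ v₀) = 0`.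
For `q = 0` this says `w ∝ v`, for `q ≠ 0` it says `w ∝ (-v₀, v₁)`; conversely `s = v₁²`,
`q = -2 v₀` realises the second case when `v₁ ≠ 0`, and when `v₁ = 0` it is the first one.
-/

def lowerToeplitz (a b c d : K) : Matrix (Fin 4) (Fin 4) K :=
  !![a, 0, 0, 0; b, a, 0, 0; c, b, a, 0; d, c, b, a]

section

variable {K}

theorem eq_lowerToeplitz_of_mul_J4_eq {P : Matrix (Fin 4) (Fin 4) K} (h : P * J4 K = J4 K * P) :
    P = lowerToeplitz K (P 0 0) (P 1 0) (P 2 0) (P 3 0) := by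
  have e : ∀ i j, (P * J4 K) i j = (J4 K * P) i j := by simp [h]
  simp [Fin.forall_fin_succ, mul_apply, J4, Fin.sum_univ_four] at e
  ext i j
  fin_cases i <;> fin_cases j <;> simp [lowerToeplitz] <;> grind

theorem lowerToeplitz_mul_J4 (a b c d : K) :
    lowerToeplitz K a b c d * J4 K = J4 K * lowerToeplitz K a b c d := by
  ext i j
  fin_cases i <;> fin_cases j <;> simp [lowerToeplitz, J4, mul_apply, Fin.sum_univ_four]

theorem det_lowerToeplitz (a b c d : K) : (lowerToeplitz K a b c d).det = a ^ 4 := by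
  simp [lowerToeplitz, det_succ_row_zero, Fin.sum_univ_succ]
  ring

theorem lowerToeplitz_mul_Aα (a b c d : K) (v : Fin 2 → K) :
    lowerToeplitz K a b c d * Aα K v =
      !![a, 0; b, a * v 1; c, b * v 1 + a * v 0; d, c * v 1 + b * v 0] := by
  ext i j
  fin_cases i <;> fin_cases j <;> simp [lowerToeplitz, Aα, mul_apply, Fin.sum_univ_four]

theorem Aα_mul (w : Fin 2 → K) (Q : Matrix (Fin 2) (Fin 2) K) :
    Aα K w * Q =
      !![Q 0 0, Q 0 1; w 1 * Q 1 0, w 1 * Q 1 1; w 0 * Q 1 0, w 0 * Q 1 1; 0, 0] := by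
  ext i j
  fin_cases i <;> fin_cases j <;> simp [Aα, mul_apply, Fin.sum_univ_two]

theorem repIsoBC1_iff (v w : Fin 2 → K) :
    RepIsoBC1 K v w ↔ ∃ a s q : K, a ≠ 0 ∧ s ≠ 0 ∧ v 1 * a = w 1 * s ∧
      w 1 * v 1 * q + v 0 * a = w 0 * s ∧ q * (w 0 * v 1 + w 1 * v 0) = 0 := by
  constructor
  · rintro ⟨P, Q, -, hQ, hJ, hA⟩
    rw [eq_lowerToeplitz_of_mul_J4_eq hJ, lowerToeplitz_mul_Aα, Aα_mul] at hA
    simp only [EmbeddingLike.apply_eq_iff_eq, vecCons_inj, and_true] at hA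
    obtain ⟨⟨h00, h01⟩, ⟨h10, h11⟩, ⟨h20, h21⟩, -, h31⟩ := hA
    simp only [h00, h10, h20] at h11 h21 h31
    have hdet : Q 0 0 * Q 1 1 ≠ 0 := by
      simpa [det_fin_two, ← h01] using ((isUnit_iff_isUnit_det Q).mp hQ).ne_zero
    refine ⟨Q 0 0, Q 1 1, Q 1 0, left_ne_zero_of_mul hdet, right_ne_zero_of_mul hdet, ?_, ?_, ?_⟩
    · linear_combination h11
    · linear_combination h21
    · linear_combination h31
  · rintro ⟨a, s, q, ha, hs, h1, h2, h3⟩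
    refine ⟨lowerToeplitz K a (w 1 * q) (w 0 * q) 0, !![a, 0; q, s], ?_, ?_,
      lowerToeplitz_mul_J4 .., ?_⟩
    · simp [isUnit_iff_isUnit_det, det_lowerToeplitz, ha]
    · simp [isUnit_iff_isUnit_det, det_fin_two_of, ha, hs]
    · rw [lowerToeplitz_mul_Aα, Aα_mul]
      simp only [of_apply, cons_val', cons_val_zero, cons_val_fin_one, cons_val_one,
        EmbeddingLike.apply_eq_iff_eq, vecCons_inj, and_true, true_and]
      exact ⟨by linear_combination h1, by linear_combination h2, by linear_combination h3⟩

theorem exists_eq_smul_of_mul_eq_mul {x y : Fin 2 → K} (hx : x ≠ 0) (hy : y ≠ 0)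
    (h : x 0 * y 1 = x 1 * y 0) : ∃ t : K, t ≠ 0 ∧ x = t • y := by
  have hxy : ∀ i j, x i * y j = x j * y i := by
    intro i j
    fin_cases i <;> fin_cases j
    exacts [rfl, h, h.symm, rfl]
  obtain ⟨i, hi⟩ : ∃ i, y i ≠ 0 := Function.ne_iff.mp hy
  have hxi : x i ≠ 0 := fun hxi ↦ hx <| funext fun j ↦ by
    simpa [hxi, hi] using hxy j i
  refine ⟨x i / y i, div_ne_zero hxi hi, funext fun j ↦ ?_⟩
  rw [Pi.smul_apply, smul_eq_mul, div_mul_eq_mul_div, eq_div_iff hi]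
  exact hxy j i

theorem repIsoBC1_smul {t : K} (ht : t ≠ 0) (v : Fin 2 → K) : RepIsoBC1 K v (t • v) :=
  (repIsoBC1_iff v _).mpr
    ⟨t, 1, 0, ht, one_ne_zero, by simp [mul_comm], by simp [mul_comm], by simp⟩

theorem repIsoBC1_smul_reflect {t : K} (ht : t ≠ 0) {v : Fin 2 → K} (hv : v 1 ≠ 0) :
    RepIsoBC1 K v (t • ![-(v 0), v 1]) := by
  refine (repIsoBC1_iff v _).mpr ⟨t * v 1 ^ 2, v 1 ^ 2, -2 * v 0, by simp [ht, hv], by simp [hv],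
    ?_, ?_, ?_⟩
  all_goals
    simp only [Pi.smul_apply, cons_val_zero, cons_val_one, cons_val_fin_one, smul_eq_mul]
    ring

theorem exists_eq_smul_of_repIsoBC1 {v w : Fin 2 → K} (hv : v ≠ 0) (hw : w ≠ 0)
    (h : RepIsoBC1 K v w) : ∃ t : K, t ≠ 0 ∧ (w = t • v ∨ w = t • ![-(v 0), v 1]) := by
  obtain ⟨a, s, q, ha, hs, h1, h2, h3⟩ := (repIsoBC1_iff v w).mp h
  rcases eq_or_ne q 0 with rfl | hq
  · refine ⟨a / s, div_ne_zero ha hs, Or.inl (funext (Fin.forall_fin_two.mpr ⟨?_, ?_⟩))⟩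
    all_goals rw [Pi.smul_apply, smul_eq_mul, div_mul_eq_mul_div, eq_div_iff hs]
    · linear_combination -h2
    · linear_combination -h1
  · have hv' : ![-(v 0), v 1] ≠ 0 := fun h0 ↦ hv <| funext <| Fin.forall_fin_two.mpr
      ⟨by simpa using congrFun h0 0, by simpa using congrFun h0 1⟩
    obtain ⟨t, ht, hwt⟩ := exists_eq_smul_of_mul_eq_mul hw hv' (by
      simp only [cons_val_zero, cons_val_one, cons_val_fin_one]
      linear_combination (mul_eq_zero.mp h3).resolve_left hq)
    exact ⟨t, ht, Or.inr hwt⟩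

end

theorem stmt_5 (v w : Fin 2 → K) (hv : v ≠ 0) (hw : w ≠ 0) :
    RepIsoBC1 K v w ↔ ∃ t : K, t ≠ 0 ∧ (w = t • v ∨ w = t • ![-(v 0), v 1]) := by
  refine ⟨exists_eq_smul_of_repIsoBC1 hv hw, ?_⟩
  rintro ⟨t, ht, rfl | rfl⟩
  · exact repIsoBC1_smul ht v
  by_cases hv1 : v 1 = 0
  · have hreflect : ![-(v 0), v 1] = -v :=
      funext <| Fin.forall_fin_two.mpr ⟨rfl, by simp [hv1]⟩
    rw [hreflect, smul_neg, ← neg_smul]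
    exact repIsoBC1_smul (neg_ne_zero.mpr ht) v
  · exact repIsoBC1_smul_reflect ht hv1

end
end

section
/- With H = KQ/(ε⁴) of type ℬ𝒞̃₁ as above and V_λ defined for λ ∈ ℙ¹: for λ, μ ∈ ℙ¹ with λ ≠ ±μ, we have Hom_H(V_λ, V_μ) = 0; and for all λ ∈ 𝔸¹, End_H(V_λ) ≅ K. -/
/-! A map commuting with the Jordan block `J₄` is a polynomial in it, i.e. lower-triangular
Toeplitz. Compatibility with `α` then fixes the Toeplitz entries in terms of `Q` and leaves the
relations `Q₁₀ (w₀ v₁ + w₁ v₀) = 0` and `P₀₀ v = Q₁₁ w`. A nonzero `Q₁₀` makes `w` proportional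
to `(-v₀, v₁)`, i.e. `μ = -λ`, a nonzero `Q₁₁` makes `w` proportional to `v`, and otherwise
everything vanishes. For `v = w = (λ, 1)` the same relations force `P` and `Q` to be scalars. -/

noncomputable section

open Matrix

variable (K : Type*) [Field K]

section

variable {K}

def lowerToeplitz4 (a b c d : K) : Matrix (Fin 4) (Fin 4) K :=
  !![a, 0, 0, 0; b, a, 0, 0; c, b, a, 0; d, c, b, a]

theorem exists_lowerToeplitz4_of_mul_J4_eq {P : Matrix (Fin 4) (Fin 4) K}
    (h : P * J4 K = J4 K * P) : ∃ a b c d, P = lowerToeplitz4 a b c d := by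
  refine ⟨P 0 0, P 1 0, P 2 0, P 3 0, ?_⟩
  have e := Matrix.ext_iff.2 h
  simp only [J4, Matrix.mul_apply, of_apply, cons_val', cons_val_fin_one, Fin.sum_univ_four,
    Fin.isValue, cons_val_zero, cons_val_one, cons_val, Fin.forall_fin_succ, mul_zero, mul_one,
    zero_add, add_zero, cons_val_succ, Fin.succ_zero_eq_one, Fin.succ_one_eq_two, Fin.reduceSucc,
    IsEmpty.forall_iff, and_true, zero_mul, one_mul] at e
  rw [← Matrix.ext_iff]
  simp only [lowerToeplitz4, of_apply, cons_val', cons_val_zero, cons_val_succ,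
    cons_val_fin_one, Fin.isValue, Fin.forall_fin_succ, Fin.succ_zero_eq_one, Fin.succ_one_eq_two,
    Fin.reduceSucc, IsEmpty.forall_iff, and_true]
  grind

theorem lowerToeplitz4_mul_Aα_eq_iff {a b c d : K} {v w : Fin 2 → K}
    {Q : Matrix (Fin 2) (Fin 2) K} :
    lowerToeplitz4 a b c d * Aα K v = Aα K w * Q ↔
      Q 0 0 = a ∧ Q 0 1 = 0 ∧ b = w 1 * Q 1 0 ∧ c = w 0 * Q 1 0 ∧ d = 0 ∧
        a * v 1 = w 1 * Q 1 1 ∧ b * v 1 + a * v 0 = w 0 * Q 1 1 ∧ c * v 1 + b * v 0 = 0 := by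
  rw [← Matrix.ext_iff]
  simp only [lowerToeplitz4, Aα, Fin.isValue, Matrix.mul_apply, of_apply, cons_val',
    cons_val_fin_one, Fin.sum_univ_four, cons_val_zero, cons_val_one, cons_val, Fin.sum_univ_two,
    Fin.forall_fin_succ, mul_one, mul_zero, add_zero, cons_val_succ, zero_add, Fin.succ_zero_eq_one,
    IsEmpty.forall_iff, and_true, one_mul, zero_mul, forall_const]
  grind

theorem exists_ne_zero_eq_smul_of_mul_eq_mul {v w : Fin 2 → K} (hv : v ≠ 0) (hw : w ≠ 0)
    (h : v 0 * w 1 = v 1 * w 0) : ∃ t : K, t ≠ 0 ∧ w = t • v := by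
  suffices ∃ t : K, w = t • v by
    obtain ⟨t, rfl⟩ := this
    exact ⟨t, fun ht => hw (by simp [ht]), rfl⟩
  rcases ne_or_eq (v 0) 0 with h0 | h0
  · refine ⟨w 0 / v 0, funext fun i => ?_⟩
    fin_cases i
    · simp [h0]
    · simp only [Fin.mk_one, Pi.smul_apply, smul_eq_mul]; field_simp; linear_combination h
  · have h1 : v 1 ≠ 0 := fun h1 => hv (funext fun i => by fin_cases i <;> simp [h0, h1])
    refine ⟨w 1 / v 1, funext fun i => ?_⟩
    fin_cases i
    · simp only [Fin.zero_eta, Pi.smul_apply, smul_eq_mul]; field_simp; linear_combination -h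
    · simp [h1]

theorem vec_neg_fst_ne_zero {v : Fin 2 → K} (hv : v ≠ 0) : ![-(v 0), v 1] ≠ 0 := by
  intro h
  apply hv
  funext i
  fin_cases i
  · simpa using congrFun h 0
  · simpa using congrFun h 1

theorem eq_zero_of_mul_J4_eq_of_mul_Aα_eq {v w : Fin 2 → K} (hv : v ≠ 0) (hw : w ≠ 0)
    (hne : ¬ ∃ t : K, t ≠ 0 ∧ (w = t • v ∨ w = t • ![-(v 0), v 1]))
    {P : Matrix (Fin 4) (Fin 4) K} {Q : Matrix (Fin 2) (Fin 2) K}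
    (hJ : P * J4 K = J4 K * P) (hA : P * Aα K v = Aα K w * Q) : P = 0 ∧ Q = 0 := by
  obtain ⟨a, b, c, d, rfl⟩ := exists_lowerToeplitz4_of_mul_J4_eq hJ
  obtain ⟨hQ00, hQ01, rfl, rfl, rfl, h1, h2, h3⟩ := lowerToeplitz4_mul_Aα_eq_iff.1 hA
  have hQ10 : Q 1 0 = 0 := by
    by_contra hq
    obtain ⟨t, ht, hwt⟩ := exists_ne_zero_eq_smul_of_mul_eq_mul (vec_neg_fst_ne_zero hv) hw
      (mul_left_cancel₀ hq <| by
        simp only [cons_val_zero, cons_val_one, neg_mul]; linear_combination -h3)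
    exact hne ⟨t, ht, Or.inr hwt⟩
  simp only [hQ10, mul_zero, zero_mul, zero_add] at h2
  have hQ11 : Q 1 1 = 0 := by
    by_contra hq
    obtain ⟨t, ht, hwt⟩ := exists_ne_zero_eq_smul_of_mul_eq_mul hv hw
      (mul_left_cancel₀ hq (by linear_combination v 1 * h2 - v 0 * h1))
    exact hne ⟨t, ht, Or.inl hwt⟩
  have hav : a • v = 0 := funext fun i => by fin_cases i <;> simp [h1, h2, hQ11]
  have ha : a = 0 := (smul_eq_zero.1 hav).resolve_right hv
  constructor
  · ext i j; fin_cases i <;> fin_cases j <;> simp [lowerToeplitz4, ha, hQ10]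
  · ext i j; fin_cases i <;> fin_cases j <;> simp [hQ00, ha, hQ01, hQ10, hQ11]

theorem eq_smul_one_of_mul_J4_eq_of_mul_Aα_eq (lam : K)
    {P : Matrix (Fin 4) (Fin 4) K} {Q : Matrix (Fin 2) (Fin 2) K}
    (hJ : P * J4 K = J4 K * P) (hA : P * Aα K ![lam, 1] = Aα K ![lam, 1] * Q) :
    ∃ c : K, P = c • (1 : Matrix (Fin 4) (Fin 4) K) ∧
      Q = c • (1 : Matrix (Fin 2) (Fin 2) K) := by
  obtain ⟨a, b, c, d, rfl⟩ := exists_lowerToeplitz4_of_mul_J4_eq hJ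
  obtain ⟨hQ00, hQ01, rfl, rfl, rfl, h1, h2, -⟩ := lowerToeplitz4_mul_Aα_eq_iff.1 hA
  simp only [Matrix.cons_val_one, Matrix.cons_val_zero, mul_one, one_mul] at h1 h2
  have hQ10 : Q 1 0 = 0 := by linear_combination h2 - lam * h1
  refine ⟨a, ?_, ?_⟩
  · ext i j; fin_cases i <;> fin_cases j <;> simp [lowerToeplitz4, hQ10]
  · ext i j; fin_cases i <;> fin_cases j <;> simp [hQ00, hQ01, hQ10, h1]

end

theorem stmt_6 :
    (∀ (v w : Fin 2 → K), v ≠ 0 → w ≠ 0 →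
      (¬ ∃ t : K, t ≠ 0 ∧ (w = t • v ∨ w = t • ![-(v 0), v 1])) →
      ∀ (P : Matrix (Fin 4) (Fin 4) K) (Q : Matrix (Fin 2) (Fin 2) K),
        P * J4 K = J4 K * P → P * Aα K v = Aα K w * Q → P = 0 ∧ Q = 0)
    ∧ (∀ (lam : K) (P : Matrix (Fin 4) (Fin 4) K) (Q : Matrix (Fin 2) (Fin 2) K),
        P * J4 K = J4 K * P → P * Aα K ![lam, 1] = Aα K ![lam, 1] * Q →
        ∃ c : K, P = c • (1 : Matrix (Fin 4) (Fin 4) K)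
          ∧ Q = c • (1 : Matrix (Fin 2) (Fin 2) K)) :=
  ⟨fun _ _ hv hw hne _ _ => eq_zero_of_mul_J4_eq_of_mul_Aα_eq hv hw hne,
    fun lam _ _ => eq_smul_one_of_mul_J4_eq_of_mul_Aα_eq lam⟩

end
end

section
/- With H of type ℬ𝒞̃₁ as above, each V_λ for λ ∈ 𝔸¹ is stable with respect to the defect ∂: explicitly, dim V_λ(1) = 2·dim V_λ(2), and every proper nonzero submodule U ⊂ V_λ satisfies 2·dim U(2) < dim U(1). -/
/-!
The ε-action `J4` is a single nilpotent Jordan block, so for a vector `u` with `J4ᵏ u ≠ 0`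
the vectors `u, J4 u, …, J4ᵏ u` are linearly independent and lie in any ε-stable `U(1)`
containing `u`. For `y ≠ 0` the vector `u = α y` has `J4² u ≠ 0`, and even `J4³ u ≠ 0` when
`y₀ ≠ 0`. Hence a nonzero `U(2)` forces `dim U(1) ≥ 3 > 2 · 1`, and `U(2) = K²` forces
`U(1) = K⁴`.
-/

noncomputable section

open Matrix

variable (K : Type*) [Field K]

section

variable {K} {V : Type*} [AddCommGroup V] [Module K V]

theorem linearIndependent_pow_apply_of_pow_apply_eq_zero {f : V →ₗ[K] V} {n : ℕ} :
    ∀ {v : V}, (f ^ n) v ≠ 0 → (f ^ (n + 1)) v = 0 →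
      LinearIndependent K (fun i : Fin (n + 1) ↦ (f ^ (i : ℕ)) v) := by
  induction n with
  | zero =>
    intro v hv _
    simpa using hv
  | succ n ih =>
    intro v hv hv'
    have htail : Fin.tail (fun i : Fin (n + 2) ↦ (f ^ (i : ℕ)) v) =
        fun i : Fin (n + 1) ↦ (f ^ (i : ℕ)) (f v) := by
      funext i
      simp [Fin.tail, pow_succ]
    rw [linearIndependent_finSucc, htail]
    refine ⟨ih (by rwa [← Module.End.mul_apply, ← pow_succ])
      (by rwa [← Module.End.mul_apply, ← pow_succ]), fun hmem ↦ hv ?_⟩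
    -- every `f ^ (i + 1) v` is killed by `f ^ (n + 1)`, while `v` is not
    have hker : Submodule.span K (Set.range fun i : Fin (n + 1) ↦ (f ^ (i : ℕ)) (f v)) ≤
        LinearMap.ker (f ^ (n + 1)) := by
      rw [Submodule.span_le]
      rintro _ ⟨i, rfl⟩
      rw [SetLike.mem_coe, LinearMap.mem_ker, ← Module.End.mul_apply,
        (Commute.pow_pow_self f (n + 1) i).eq, Module.End.mul_apply,
        ← Module.End.mul_apply (f ^ (n + 1)), ← pow_succ, hv', map_zero]
    simpa using hker hmem

theorem Submodule.add_one_le_finrank_of_pow_apply_ne_zero [FiniteDimensional K V]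
    {f : V →ₗ[K] V} {U : Submodule K V} (hU : ∀ x ∈ U, f x ∈ U) {v : V} (hv : v ∈ U) {n : ℕ}
    (hn : (f ^ n) v ≠ 0) (hn' : (f ^ (n + 1)) v = 0) : n + 1 ≤ Module.finrank K U := by
  have hmem (i : ℕ) : (f ^ i) v ∈ U := by
    induction i with
    | zero => simpa using hv
    | succ i ih => rw [pow_succ', Module.End.mul_apply]; exact hU _ ih
  have hspan : Submodule.span K (Set.range fun i : Fin (n + 1) ↦ (f ^ (i : ℕ)) v) ≤ U :=
    Submodule.span_le.mpr (Set.range_subset_iff.mpr fun i ↦ hmem i)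
  calc n + 1 = Module.finrank K (Submodule.span K
        (Set.range fun i : Fin (n + 1) ↦ (f ^ (i : ℕ)) v)) := by
        rw [finrank_span_eq_card (linearIndependent_pow_apply_of_pow_apply_eq_zero hn hn'),
          Fintype.card_fin]
    _ ≤ Module.finrank K U := Submodule.finrank_mono hspan

theorem J4_mulVec (w : Fin 4 → K) : J4 K *ᵥ w = ![0, w 0, w 1, w 2] := by
  ext i
  fin_cases i <;> simp [J4, mulVec, dotProduct, Fin.sum_univ_four]

theorem Aα_mulVec (lam : K) (y : Fin 2 → K) :
    Aα K ![lam, 1] *ᵥ y = ![y 0, y 1, lam * y 1, 0] := by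
  ext i
  fin_cases i <;> simp [Aα, mulVec, dotProduct, Fin.sum_univ_two]

theorem four_le_finrank_of_Aα_mulVec_mem {U : Submodule K (Fin 4 → K)}
    (hU : ∀ x ∈ U, J4 K *ᵥ x ∈ U) {lam : K} {y : Fin 2 → K} (hy : Aα K ![lam, 1] *ᵥ y ∈ U)
    (hy0 : y 0 ≠ 0) : 4 ≤ Module.finrank K U :=
  Submodule.add_one_le_finrank_of_pow_apply_ne_zero (f := mulVecLin (J4 K)) (n := 3) hU hy
    (by simpa [Module.End.pow_apply, J4_mulVec, Aα_mulVec] using hy0)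
    (by simp [Module.End.pow_apply, J4_mulVec, Aα_mulVec])

theorem three_le_finrank_of_Aα_mulVec_mem {U : Submodule K (Fin 4 → K)}
    (hU : ∀ x ∈ U, J4 K *ᵥ x ∈ U) {lam : K} {y : Fin 2 → K} (hy : Aα K ![lam, 1] *ᵥ y ∈ U)
    (hy0 : y ≠ 0) : 3 ≤ Module.finrank K U := by
  by_cases h0 : y 0 = 0
  · have h1 : y 1 ≠ 0 := fun h1 ↦ hy0 (by ext i; fin_cases i <;> simp [h0, h1])
    exact Submodule.add_one_le_finrank_of_pow_apply_ne_zero (f := mulVecLin (J4 K)) (n := 2) hU hy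
      (by simpa [Module.End.pow_apply, J4_mulVec, Aα_mulVec, h0] using h1)
      (by simp [Module.End.pow_apply, J4_mulVec, Aα_mulVec, h0])
  · exact Nat.le_of_succ_le (four_le_finrank_of_Aα_mulVec_mem hU hy h0)

end

theorem stmt_7 (lam : K) :
    Module.finrank K (Fin 4 → K) = 2 * Module.finrank K (Fin 2 → K) ∧
    ∀ (U1 : Submodule K (Fin 4 → K)) (U2 : Submodule K (Fin 2 → K)),
      (∀ x ∈ U1, (J4 K).mulVec x ∈ U1) →
      (∀ y ∈ U2, (Aα K ![lam, 1]).mulVec y ∈ U1) →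
      ¬(U1 = ⊥ ∧ U2 = ⊥) → ¬(U1 = ⊤ ∧ U2 = ⊤) →
      2 * Module.finrank K U2 < Module.finrank K U1 := by
  refine ⟨by simp, fun U1 U2 hJ hA hbot htop ↦ ?_⟩
  rcases eq_or_ne U2 ⊥ with rfl | h2bot
  · have : U1 ≠ ⊥ := fun h ↦ hbot ⟨h, rfl⟩
    simpa [Nat.pos_iff_ne_zero, Submodule.finrank_eq_zero] using this
  rcases eq_or_ne U2 ⊤ with rfl | h2top
  · have h4 := four_le_finrank_of_Aα_mulVec_mem hJ (hA ![1, 0] Submodule.mem_top) (by simp)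
    have : U1 = ⊤ := Submodule.eq_top_of_finrank_eq
      (le_antisymm (Submodule.finrank_le U1) (by simpa using h4))
    exact absurd ⟨this, rfl⟩ htop
  obtain ⟨y, hy, hy0⟩ := (Submodule.ne_bot_iff U2).mp h2bot
  have h2 : Module.finrank K U2 < 2 := by simpa using Submodule.finrank_lt h2top
  have h3 := three_le_finrank_of_Aα_mulVec_mem hJ (hA y hy) hy0
  omega

end
end

section
/- Let H = KQ/(ε⁴) of type ℬ𝒞̃₁. The representation V̄_∞ with V(2)=K, V(1)=K², V(ε) the nilpotent 2×2 Jordan block, and V(α) = (1,0)ᵗ is ∂-stable, and there is a non-split short exact sequence 0 → V̄_∞ → V_∞ → V̄_∞ → 0, where V_∞ = V_{(1:0)}; in particular V_∞ is ∂-semistable but not ∂-stable. -/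
/-!
For a subrepresentation (U₁, U₂), U₁ contains α(U₂) + ε(α(U₂)). For both V̄_∞ and V_∞ the map
(y, z) ↦ α y + ε (α z) is injective on V(2) × V(2), so 2 dim U₂ ≤ dim U₁: V_∞ is ∂-semistable,
and since dim V̄_∞(2) = 1 equality for V̄_∞ only holds at 0 and V̄_∞, so V̄_∞ is ∂-stable.
The image of V̄_∞ in V_∞ is a proper subrepresentation with equality, so V_∞ is not ∂-stable.
The extension does not split already as K[ε]-modules: K[ε]/ε⁴ is not K[ε]/ε² ⊕ K[ε]/ε².
-/

noncomputable section

open Matrix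

variable (K : Type*) [Field K]

/-- The ε-action on V̄_∞(1) = K² : the nilpotent Jordan block of size 2. -/
def J2 : Matrix (Fin 2) (Fin 2) K := !![0,0; 1,0]

/-- The α-action of V̄_∞ : the column (1,0)ᵗ. -/
def aInf : Matrix (Fin 2) (Fin 1) K := !![1; 0]

section General

variable {K} {V W : Type*} [AddCommGroup V] [Module K V] [AddCommGroup W] [Module K W]
  [FiniteDimensional K V] [FiniteDimensional K W]

theorem two_mul_finrank_le_of_injective (ε : V →ₗ[K] V) (α : W →ₗ[K] V)
    (hinj : Function.Injective (α.coprod (ε ∘ₗ α)))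
    (U1 : Submodule K V) (U2 : Submodule K W)
    (hε : ∀ x ∈ U1, ε x ∈ U1) (hα : ∀ y ∈ U2, α y ∈ U1) :
    2 * Module.finrank K U2 ≤ Module.finrank K U1 := by
  have hmem (p : U2 × U2) : (α.coprod (ε ∘ₗ α) ∘ₗ U2.subtype.prodMap U2.subtype) p ∈ U1 :=
    U1.add_mem (hα _ p.1.2) (hε _ (hα _ p.2.2))
  have := LinearMap.finrank_le_finrank_of_injective <|
    (LinearMap.injective_codRestrict_iff hmem).mpr <|
      hinj.comp (Prod.map_injective.mpr ⟨U2.injective_subtype, U2.injective_subtype⟩)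
  rwa [Module.finrank_prod, ← two_mul] at this

theorem range_mulVecLin_isSubrep {m n m' n' : Type*} [Fintype m] [Fintype n] [Fintype m']
    [Fintype n'] {ε : Matrix n n K} {α : Matrix n m K} {ε' : Matrix n' n' K} {α' : Matrix n' m' K}
    {ι₁ : Matrix n n' K} {ι₂ : Matrix m m' K} (hε : ι₁ * ε' = ε * ι₁) (hα : ι₁ * α' = α * ι₂) :
    (∀ x ∈ LinearMap.range ι₁.mulVecLin, ε *ᵥ x ∈ LinearMap.range ι₁.mulVecLin) ∧
      ∀ y ∈ LinearMap.range ι₂.mulVecLin, α *ᵥ y ∈ LinearMap.range ι₁.mulVecLin := by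
  constructor
  · rintro _ ⟨x, rfl⟩
    exact ⟨ε' *ᵥ x, by simp [mulVec_mulVec, hε]⟩
  · rintro _ ⟨y, rfl⟩
    exact ⟨α' *ᵥ y, by simp [mulVec_mulVec, hα]⟩

theorem Matrix.exact_of_splitting {R : Type*} [CommRing R] {m n p : Type*}
    [Fintype m] [Fintype n] [Fintype p] [DecidableEq m] [DecidableEq n] [DecidableEq p]
    {ι : Matrix n m R} {π : Matrix p n R} (ρ : Matrix m n R) (σ : Matrix n p R)
    (hρ : ρ * ι = 1) (hσ : π * σ = 1) (hsum : ι * ρ + σ * π = 1) :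
    Function.Injective ι.mulVecLin ∧ Function.Surjective π.mulVecLin ∧
      LinearMap.range ι.mulVecLin = LinearMap.ker π.mulVecLin := by
  have hπι : π * ι = 0 := by
    have : π * ι = π * ι + π * ι := calc
      π * ι = π * (ι * ρ + σ * π) * ι := by rw [hsum, Matrix.mul_one]
      _ = π * ι * (ρ * ι) + π * σ * (π * ι) := by
        simp only [Matrix.mul_add, Matrix.add_mul, Matrix.mul_assoc]
      _ = π * ι + π * ι := by rw [hρ, hσ, Matrix.mul_one, Matrix.one_mul]
    simpa using this
  refine ⟨fun x y hxy => ?_, fun z => ⟨σ *ᵥ z, ?_⟩, le_antisymm ?_ fun x hx => ⟨ρ *ᵥ x, ?_⟩⟩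
  · simpa [hρ] using congrArg (ρ *ᵥ ·) hxy
  · simp [hσ]
  · rintro _ ⟨x, rfl⟩
    simp [hπι]
  · have hx : π *ᵥ x = 0 := hx
    simpa [add_mulVec, ← mulVec_mulVec, hx] using congrArg (· *ᵥ x) hsum

end General

theorem VInf_coprod_apply (y z : Fin 2 → K) :
    (Aα K ![1, 0]).mulVecLin.coprod ((J4 K).mulVecLin ∘ₗ (Aα K ![1, 0]).mulVecLin) (y, z) =
      ![y 0, z 0, y 1, z 1] := by
  ext i; fin_cases i <;> simp [Aα, J4, dotProduct, Fin.sum_univ_succ]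

theorem VInf_coprod_injective :
    Function.Injective ((Aα K ![1, 0]).mulVecLin.coprod
      ((J4 K).mulVecLin ∘ₗ (Aα K ![1, 0]).mulVecLin)) := by
  rintro ⟨y, z⟩ ⟨y', z'⟩ h
  simp only [VInf_coprod_apply, vecCons_inj] at h
  simp [Prod.ext_iff, funext_iff, Fin.forall_fin_two, h]

theorem VbarInf_coprod_apply (y z : Fin 1 → K) :
    (aInf K).mulVecLin.coprod ((J2 K).mulVecLin ∘ₗ (aInf K).mulVecLin) (y, z) = ![y 0, z 0] := by
  ext i; fin_cases i <;> simp [aInf, J2, dotProduct]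

theorem VbarInf_coprod_injective :
    Function.Injective ((aInf K).mulVecLin.coprod ((J2 K).mulVecLin ∘ₗ (aInf K).mulVecLin)) := by
  rintro ⟨y, z⟩ ⟨y', z'⟩ h
  simp only [VbarInf_coprod_apply, vecCons_inj] at h
  simp [Prod.ext_iff, funext_iff, Fin.forall_fin_one, h]

def inclInf₁ : Matrix (Fin 4) (Fin 2) K := !![0, 0; 0, 0; 1, 0; 0, 1]

def inclInf₂ : Matrix (Fin 2) (Fin 1) K := !![0; 1]

def projInf₁ : Matrix (Fin 2) (Fin 4) K := !![1, 0, 0, 0; 0, 1, 0, 0]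

def projInf₂ : Matrix (Fin 1) (Fin 2) K := !![1, 0]

theorem inclInf₁_mul_J2 : inclInf₁ K * J2 K = J4 K * inclInf₁ K := by
  ext i j; fin_cases i <;> fin_cases j <;> simp [inclInf₁, J2, J4, mul_apply, Fin.sum_univ_succ]

theorem inclInf₁_mul_aInf : inclInf₁ K * aInf K = Aα K ![1, 0] * inclInf₂ K := by
  ext i j; fin_cases i <;> fin_cases j <;>
    simp [inclInf₁, inclInf₂, aInf, Aα, mul_apply, Fin.sum_univ_succ]

theorem projInf₁_mul_J4 : projInf₁ K * J4 K = J2 K * projInf₁ K := by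
  ext i j; fin_cases i <;> fin_cases j <;> simp [projInf₁, J2, J4, mul_apply, Fin.sum_univ_succ]

theorem projInf₁_mul_Aα : projInf₁ K * Aα K ![1, 0] = aInf K * projInf₂ K := by
  ext i j; fin_cases i <;> fin_cases j <;>
    simp [projInf₁, projInf₂, aInf, Aα, mul_apply, Fin.sum_univ_succ]

theorem inclInf₁_projInf₁_exact :
    Function.Injective (inclInf₁ K).mulVecLin ∧ Function.Surjective (projInf₁ K).mulVecLin ∧
      LinearMap.range (inclInf₁ K).mulVecLin = LinearMap.ker (projInf₁ K).mulVecLin := by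
  apply Matrix.exact_of_splitting !![0, 0, 1, 0; 0, 0, 0, 1] !![1, 0; 0, 1; 0, 0; 0, 0] <;>
    ext i j <;> fin_cases i <;> fin_cases j <;>
      simp [inclInf₁, projInf₁, mul_apply, Fin.sum_univ_succ]

theorem inclInf₂_projInf₂_exact :
    Function.Injective (inclInf₂ K).mulVecLin ∧ Function.Surjective (projInf₂ K).mulVecLin ∧
      LinearMap.range (inclInf₂ K).mulVecLin = LinearMap.ker (projInf₂ K).mulVecLin := by
  apply Matrix.exact_of_splitting !![0, 1] !![1; 0] <;>
    ext i j <;> fin_cases i <;> fin_cases j <;>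
      simp [inclInf₂, projInf₂, mul_apply, Fin.sum_univ_succ]

theorem projInf₁_mul_ne_one_of_commute (s : Matrix (Fin 4) (Fin 2) K) (hs : s * J2 K = J4 K * s) :
    projInf₁ K * s ≠ 1 := by
  intro h
  -- s maps ker J2 = K e₂ into ker J4 = K e₄, which projInf₁ kills.
  have h11 : s 1 1 = 1 := by simpa [projInf₁, mul_apply, Fin.sum_univ_succ] using congrFun₂ h 1 1
  have h21 : 0 = s 1 1 := by simpa [J2, J4, mul_apply, Fin.sum_univ_succ] using congrFun₂ hs 2 1
  exact zero_ne_one (h21.trans h11)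

theorem VInf_semistable (U1 : Submodule K (Fin 4 → K)) (U2 : Submodule K (Fin 2 → K))
    (hJ : ∀ x ∈ U1, (J4 K).mulVec x ∈ U1) (hα : ∀ y ∈ U2, (Aα K ![1, 0]).mulVec y ∈ U1) :
    2 * Module.finrank K U2 ≤ Module.finrank K U1 :=
  two_mul_finrank_le_of_injective _ _ (VInf_coprod_injective K) U1 U2 hJ hα

theorem VbarInf_stable (U1 : Submodule K (Fin 2 → K)) (U2 : Submodule K (Fin 1 → K))
    (hJ : ∀ x ∈ U1, (J2 K).mulVec x ∈ U1) (hα : ∀ y ∈ U2, (aInf K).mulVec y ∈ U1)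
    (hbot : ¬(U1 = ⊥ ∧ U2 = ⊥)) (htop : ¬(U1 = ⊤ ∧ U2 = ⊤)) :
    2 * Module.finrank K U2 < Module.finrank K U1 := by
  have hle := two_mul_finrank_le_of_injective _ _ (VbarInf_coprod_injective K) U1 U2 hJ hα
  have hU2 : Module.finrank K U2 ≤ 1 := by
    simpa using Submodule.finrank_le U2
  refine hle.lt_of_ne fun heq => ?_
  rcases Nat.le_one_iff_eq_zero_or_eq_one.mp hU2 with h0 | h1
  · exact hbot ⟨Submodule.finrank_eq_zero.mp (by omega), Submodule.finrank_eq_zero.mp h0⟩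
  · exact htop ⟨Submodule.eq_top_of_finrank_eq (by simp; omega),
      Submodule.eq_top_of_finrank_eq (by simpa using h1)⟩

theorem VInf_exists_destabilizing :
    ∃ (U1 : Submodule K (Fin 4 → K)) (U2 : Submodule K (Fin 2 → K)),
      (∀ x ∈ U1, (J4 K).mulVec x ∈ U1) ∧ (∀ y ∈ U2, (Aα K ![1, 0]).mulVec y ∈ U1) ∧
      ¬(U1 = ⊥ ∧ U2 = ⊥) ∧ ¬(U1 = ⊤ ∧ U2 = ⊤) ∧
      Module.finrank K U1 = 2 * Module.finrank K U2 := by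
  have h1 := LinearMap.finrank_range_of_inj (inclInf₁_projInf₁_exact K).1
  have h2 := LinearMap.finrank_range_of_inj (inclInf₂_projInf₂_exact K).1
  simp only [Module.finrank_fin_fun] at h1 h2
  obtain ⟨hJ, hα⟩ := range_mulVecLin_isSubrep (inclInf₁_mul_J2 K) (inclInf₁_mul_aInf K)
  refine ⟨_, _, hJ, hα, fun h => ?_, fun h => ?_, by rw [h1, h2]⟩
  · rw [h.2, finrank_bot] at h2
    omega
  · rw [h.1, finrank_top, Module.finrank_fin_fun] at h1
    omega

theorem stmt_8 :
    -- V̄_∞ is ∂-stable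
    (∀ (U1 : Submodule K (Fin 2 → K)) (U2 : Submodule K (Fin 1 → K)),
        (∀ x ∈ U1, (J2 K).mulVec x ∈ U1) → (∀ y ∈ U2, (aInf K).mulVec y ∈ U1) →
        ¬(U1 = ⊥ ∧ U2 = ⊥) → ¬(U1 = ⊤ ∧ U2 = ⊤) →
        2 * Module.finrank K U2 < Module.finrank K U1)
    ∧ -- non-split short exact sequence 0 → V̄_∞ → V_∞ → V̄_∞ → 0
    (∃ (ι1 : Matrix (Fin 4) (Fin 2) K) (ι2 : Matrix (Fin 2) (Fin 1) K)
       (π1 : Matrix (Fin 2) (Fin 4) K) (π2 : Matrix (Fin 1) (Fin 2) K),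
        ι1 * J2 K = J4 K * ι1 ∧ ι1 * aInf K = Aα K ![1, 0] * ι2 ∧
        π1 * J4 K = J2 K * π1 ∧ π1 * Aα K ![1, 0] = aInf K * π2 ∧
        Function.Injective ι1.mulVecLin ∧ Function.Injective ι2.mulVecLin ∧
        Function.Surjective π1.mulVecLin ∧ Function.Surjective π2.mulVecLin ∧
        LinearMap.range ι1.mulVecLin = LinearMap.ker π1.mulVecLin ∧
        LinearMap.range ι2.mulVecLin = LinearMap.ker π2.mulVecLin ∧
        ¬ ∃ (s1 : Matrix (Fin 4) (Fin 2) K) (s2 : Matrix (Fin 2) (Fin 1) K),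
            s1 * J2 K = J4 K * s1 ∧ s1 * aInf K = Aα K ![1, 0] * s2 ∧
            π1 * s1 = 1 ∧ π2 * s2 = 1)
    ∧ -- V_∞ is ∂-semistable
    (∀ (U1 : Submodule K (Fin 4 → K)) (U2 : Submodule K (Fin 2 → K)),
        (∀ x ∈ U1, (J4 K).mulVec x ∈ U1) →
        (∀ y ∈ U2, (Aα K ![1, 0]).mulVec y ∈ U1) →
        2 * Module.finrank K U2 ≤ Module.finrank K U1)
    ∧ -- but V_∞ is not ∂-stable
    ¬ (∀ (U1 : Submodule K (Fin 4 → K)) (U2 : Submodule K (Fin 2 → K)),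
        (∀ x ∈ U1, (J4 K).mulVec x ∈ U1) →
        (∀ y ∈ U2, (Aα K ![1, 0]).mulVec y ∈ U1) →
        ¬(U1 = ⊥ ∧ U2 = ⊥) → ¬(U1 = ⊤ ∧ U2 = ⊤) →
        2 * Module.finrank K U2 < Module.finrank K U1) := by
  obtain ⟨hι₁, hπ₁, hexact₁⟩ := inclInf₁_projInf₁_exact K
  obtain ⟨hι₂, hπ₂, hexact₂⟩ := inclInf₂_projInf₂_exact K
  refine ⟨VbarInf_stable K, ⟨inclInf₁ K, inclInf₂ K, projInf₁ K, projInf₂ K, inclInf₁_mul_J2 K,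
    inclInf₁_mul_aInf K, projInf₁_mul_J4 K, projInf₁_mul_Aα K, hι₁, hι₂, hπ₁, hπ₂, hexact₁, hexact₂,
    ?_⟩, VInf_semistable K, fun hstable => ?_⟩
  · rintro ⟨s, -, hs, -, hπs, -⟩
    exact projInf₁_mul_ne_one_of_commute K s hs hπs
  · obtain ⟨U1, U2, hJ, hα, hbot, htop, heq⟩ := VInf_exists_destabilizing K
    have := hstable U1 U2 hJ hα hbot htop
    omega

end
end

section
/- Let H = KQ/(ε⁴) of type ℬ𝒞̃₁ and let V ∈ mod(H) be ∂-stable. Then the dimension vector of V is (2,1) or (4,2); moreover V ≅ V̄_∞ or V ≅ V_λ for some λ ∈ 𝔸¹. -/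
/-!
For a ∂-stable representation `(f, g)` with `f⁴ = 0`, the subrepresentation generated by one
nonzero vector `w ∈ V(2)` shows that `f g w ≠ 0`, and, once `dim V(2) ≥ 2`, that `f² g w ≠ 0`.
If `dim V(2) = 1`, then `f² = 0` and `g w, f g w` is a basis of `V(1)`, which gives `V̄_∞`.
Otherwise `g ⊕ f² g : V(2)² → V(1)` is an isomorphism, so `f g = g a + f² g c` for endomorphisms
`a, c` of `V(2)`, and comparing `f² g` with `f (g a + f² g c)` gives `a² = 0` and `ca + ac = 1`.
A subspace `T` invariant under `a` and `c` spans the subrepresentation `(g T + f² g T, T)`, so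
stability leaves no proper nonzero such `T`. For an eigenvector `v` of `c` with eigenvalue `ν`,
`span {v, a v}` is one, hence `dim V(2) = 2`, and the basis `g v, f g v, f² g v, f³ g v` of `V(1)`
exhibits `V ≅ V_λ` with `λ = -ν`.
-/

noncomputable section

open Matrix

variable (K : Type*) [Field K]

open Module

section LinearAlgebra

variable {K} {V W ι κ : Type*} [AddCommGroup V] [Module K V] [AddCommGroup W] [Module K W]

lemma Module.End.pow_finrank_eq_zero_of_isNilpotent [FiniteDimensional K V] {φ : End K V}
    (h : IsNilpotent φ) : φ ^ finrank K V = 0 := by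
  simpa [h.charpoly_eq_X_pow_finrank] using φ.aeval_self_charpoly

lemma finrank_span_pair_le (x y : V) : finrank K (Submodule.span K {x, y}) ≤ 2 := by
  classical
  have h := finrank_span_finset_le_card (R := K) ({x, y} : Finset V)
  rw [Finset.coe_pair] at h
  exact h.trans Finset.card_le_two

lemma linearIndependent_pow_apply {φ : End K V} {x : V} :
    ∀ {n : ℕ}, (φ ^ (n + 1)) x = 0 → (φ ^ n) x ≠ 0 →
      LinearIndependent K (fun i : Fin (n + 1) => (φ ^ (i : ℕ)) x)
  | 0, _, hx => by simpa using hx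
  | n + 1, h0, h1 => by
    have hcons : (fun i : Fin (n + 2) => (φ ^ (i : ℕ)) x) =
        Fin.cons x (fun i : Fin (n + 1) => (φ ^ (i : ℕ)) (φ x)) := by
      ext i
      refine Fin.cases rfl (fun i => ?_) i
      simp [pow_succ]
    have htail : ∀ i : Fin (n + 1), (φ ^ (i : ℕ)) (φ x) ∈ LinearMap.ker (φ ^ (n + 1)) := by
      intro i
      rw [LinearMap.mem_ker, ← End.mul_apply, ← End.mul_apply, ← pow_add, ← pow_succ,
        show n + 1 + i + 1 = (i : ℕ) + (n + 2) by omega, pow_add, End.mul_apply, h0, map_zero]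
    rw [hcons, linearIndependent_finCons]
    refine ⟨linearIndependent_pow_apply (by simpa [pow_succ] using h0)
      (by simpa [pow_succ] using h1), fun hx => h1 ?_⟩
    have := Submodule.span_le.mpr (Set.range_subset_iff.mpr htail) hx
    simpa using this

lemma LinearMap.toMatrix_eq_of_apply_basis [Fintype ι] [Fintype κ] [DecidableEq ι]
    {b₁ : Basis ι K V} {b₂ : Basis κ K W} {φ : V →ₗ[K] W} {M : Matrix κ ι K}
    (h : ∀ j, φ (b₁ j) = ∑ i, M i j • b₂ i) : toMatrix b₁ b₂ φ = M := by
  rw [← LinearMap.toMatrix_toLin b₁ b₂ M]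
  congr 1
  exact b₁.ext fun j => by rw [h, Matrix.toLin_self]

lemma Module.Basis.equivFun_apply_eq_mulVec [Fintype ι] [Fintype κ] [DecidableEq ι]
    {b₁ : Basis ι K V} {b₂ : Basis κ K W} {φ : V →ₗ[K] W} {M : Matrix κ ι K}
    (h : LinearMap.toMatrix b₁ b₂ φ = M) (x : V) : b₂.equivFun (φ x) = M *ᵥ b₁.equivFun x := by
  rw [← h, Basis.equivFun_apply, Basis.equivFun_apply, LinearMap.toMatrix_mulVec_repr]

end LinearAlgebra

section Decomposition

variable {K} {V W : Type*} [AddCommGroup V] [Module K V] [AddCommGroup W] [Module K W]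
  {f : Module.End K V} {g : W →ₗ[K] V}

lemma apply_four_eq_zero (hf : f ^ 4 = 0) (x : V) : f (f (f (f x))) = 0 := by
  simpa [pow_succ] using congr($hf x)

lemma injective_coprod_comp (hf : f ^ 4 = 0) (hinj : ∀ w, f (f (g w)) = 0 → w = 0) :
    Function.Injective (g.coprod (f ∘ₗ f ∘ₗ g)) := by
  rw [← LinearMap.ker_eq_bot, LinearMap.ker_eq_bot']
  rintro ⟨u, v⟩ h
  simp only [LinearMap.coprod_apply, LinearMap.comp_apply] at h
  have hu : u = 0 := hinj u (by simpa [apply_four_eq_zero hf] using congr(f (f $h)))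
  subst hu
  have hv : v = 0 := hinj v (by simpa using h)
  rw [hv, Prod.mk_zero_zero]

lemma exists_apply_eq_add [FiniteDimensional K V] [FiniteDimensional K W] (hf : f ^ 4 = 0)
    (hinj : ∀ w, f (f (g w)) = 0 → w = 0) (hdim : finrank K V = 2 * finrank K W) :
    ∃ a c : Module.End K W, ∀ u, f (g u) = g (a u) + f (f (g (c u))) := by
  let e := LinearMap.linearEquivOfInjective _ (injective_coprod_comp hf hinj)
    (by rw [finrank_prod, hdim]; omega)
  refine ⟨LinearMap.fst K W W ∘ₗ e.symm.toLinearMap ∘ₗ f ∘ₗ g,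
    LinearMap.snd K W W ∘ₗ e.symm.toLinearMap ∘ₗ f ∘ₗ g, fun u => ?_⟩
  conv_lhs => rw [← e.apply_symm_apply (f (g u))]
  rfl

variable {a c : Module.End K W} (hdec : ∀ u, f (g u) = g (a u) + f (f (g (c u))))
  (hf : f ^ 4 = 0)
include hdec hf

lemma apply_apply_apply_eq (u : W) : f (f (f (g u))) = f (f (g (a u))) := by
  rw [hdec u]
  simp [apply_four_eq_zero hf]

variable (hinj : ∀ w, f (f (g w)) = 0 → w = 0)
include hinj

lemma apply_apply_eq_zero_and_add_eq_self (u : W) : a (a u) = 0 ∧ c (a u) + a (c u) = u := by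
  have h : f (f (g u)) = g (a (a u)) + f (f (g (c (a u) + a (c u)))) := by
    rw [hdec u, map_add, hdec (a u), apply_apply_apply_eq hdec hf]
    simp only [map_add, add_assoc]
  have := injective_coprod_comp hf hinj (a₁ := (a (a u), c (a u) + a (c u))) (a₂ := (0, u))
    (by simpa using h.symm)
  simpa [eq_comm] using this

variable {ν : K} {v : W} (hv : c.HasEigenvector ν v)
include hv

lemma apply_ne_zero_of_hasEigenvector : a v ≠ 0 := by
  intro hav
  have := (apply_apply_eq_zero_and_add_eq_self hdec hf hinj v).2
  rw [hav, map_zero, hv.apply_eq_smul, map_smul, hav, smul_zero, add_zero] at this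
  exact hv.2 this.symm

lemma apply_mem_span_of_hasEigenvector {t : W} (ht : t ∈ Submodule.span K {v, a v}) :
    c t ∈ Submodule.span K {v, a v} := by
  have hca : c (a v) = v - ν • a v := by
    rw [eq_sub_iff_add_eq, ← map_smul, ← hv.apply_eq_smul]
    exact (apply_apply_eq_zero_and_add_eq_self hdec hf hinj v).2
  obtain ⟨r, s, rfl⟩ := Submodule.mem_span_pair.mp ht
  refine Submodule.mem_span_pair.mpr ⟨r * ν + s, -(s * ν), ?_⟩
  simp only [map_add, map_smul, hca, hv.apply_eq_smul]
  module

end Decomposition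

section Stability

variable {K} {V W : Type*} [AddCommGroup V] [Module K V] [AddCommGroup W] [Module K W]

/-- ∂-stability of the representation with `V(1) = V`, `V(2) = W`, `V(ε) = f`, `V(α) = g`. -/
def IsDStable (f : Module.End K V) (g : W →ₗ[K] V) : Prop :=
  ∀ (U₁ : Submodule K V) (U₂ : Submodule K W), (∀ x ∈ U₁, f x ∈ U₁) → (∀ y ∈ U₂, g y ∈ U₁) →
    ¬(U₁ = ⊥ ∧ U₂ = ⊥) → ¬(U₁ = ⊤ ∧ U₂ = ⊤) → 2 * finrank K U₂ < finrank K U₁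

namespace IsDStable

variable {f : Module.End K V} {g : W →ₗ[K] V}

lemma apply_ne_zero [FiniteDimensional K V] (hs : IsDStable f g) (hV : 1 < finrank K V)
    {w : W} (hw : w ≠ 0) : f (g w) ≠ 0 := by
  intro hfw
  have hU₁ : finrank K (K ∙ g w) ≤ 1 := by simpa using finrank_span_le_card (R := K) {g w}
  refine absurd (hs (K ∙ g w) (K ∙ w) ?_ ?_ ?_ ?_) ?_
  · intro x hx
    obtain ⟨r, rfl⟩ := Submodule.mem_span_singleton.mp hx
    simp [hfw]
  · intro y hy
    obtain ⟨r, rfl⟩ := Submodule.mem_span_singleton.mp hy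
    simpa using Submodule.smul_mem _ r (Submodule.mem_span_singleton_self (g w))
  · exact fun h => hw (Submodule.span_singleton_eq_bot.mp h.2)
  · rintro ⟨h, -⟩
    rw [h, finrank_top] at hU₁
    omega
  · rw [finrank_span_singleton hw]
    omega

lemma apply_apply_ne_zero [FiniteDimensional K W] (hs : IsDStable f g) (hW : 1 < finrank K W)
    {w : W} (hw : w ≠ 0) : f (f (g w)) ≠ 0 := by
  intro hffw
  have hU₁ := finrank_span_pair_le (K := K) (g w) (f (g w))
  refine absurd (hs (Submodule.span K {g w, f (g w)}) (K ∙ w) ?_ ?_ ?_ ?_) ?_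
  · intro x hx
    obtain ⟨r, s, rfl⟩ := Submodule.mem_span_pair.mp hx
    exact Submodule.mem_span_pair.mpr ⟨0, r, by simp [hffw]⟩
  · intro y hy
    obtain ⟨r, rfl⟩ := Submodule.mem_span_singleton.mp hy
    exact Submodule.mem_span_pair.mpr ⟨r, 0, by simp⟩
  · exact fun h => hw (Submodule.span_singleton_eq_bot.mp h.2)
  · rintro ⟨-, h⟩
    have := finrank_span_singleton (K := K) hw
    rw [h, finrank_top] at this
    omega
  · rw [finrank_span_singleton hw]
    omega

lemma eq_bot_or_eq_top_of_invariant [FiniteDimensional K W] (hs : IsDStable f g)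
    {a c : Module.End K W} (hdec : ∀ u, f (g u) = g (a u) + f (f (g (c u))))
    (hf3 : ∀ u, f (f (f (g u))) = f (f (g (a u)))) {T : Submodule K W}
    (ha : ∀ t ∈ T, a t ∈ T) (hc : ∀ t ∈ T, c t ∈ T) : T = ⊥ ∨ T = ⊤ := by
  by_contra! hT
  let U := T.map g ⊔ T.map (f ∘ₗ f ∘ₗ g)
  have hU : ∀ x ∈ U, f x ∈ U := by
    intro x hx
    obtain ⟨_, ⟨t, ht, rfl⟩, _, ⟨t', ht', rfl⟩, rfl⟩ := Submodule.mem_sup.mp hx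
    have hx' : f (g t + f (f (g t'))) = g (a t) + f (f (g (c t + a t'))) := by
      rw [map_add, hdec t, hf3 t', map_add, map_add, map_add, add_assoc]
    simp only [LinearMap.comp_apply, hx']
    exact Submodule.add_mem_sup (Submodule.mem_map_of_mem (ha t ht))
      (Submodule.mem_map_of_mem (p := T) (f := f ∘ₗ f ∘ₗ g) (T.add_mem (hc t ht) (ha t' ht')))
  have hlt := hs U T hU (fun y hy => Submodule.mem_sup_left (Submodule.mem_map_of_mem hy))
    (fun h => hT.1 h.2) (fun h => hT.2 h.2)
  have : finrank K U ≤ _ := Submodule.finrank_add_le_finrank_add_finrank _ _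
  have := Submodule.finrank_map_le g T
  have := Submodule.finrank_map_le (f ∘ₗ f ∘ₗ g) T
  omega

lemma span_pair_eq_top_of_hasEigenvector [FiniteDimensional K W] (hs : IsDStable f g)
    (hf : f ^ 4 = 0) (hinj : ∀ w, f (f (g w)) = 0 → w = 0) {a c : Module.End K W}
    (hdec : ∀ u, f (g u) = g (a u) + f (f (g (c u)))) {ν : K} {v : W}
    (hv : c.HasEigenvector ν v) : Submodule.span K {v, a v} = ⊤ := by
  refine (hs.eq_bot_or_eq_top_of_invariant hdec (apply_apply_apply_eq hdec hf) ?_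
    fun _ => apply_mem_span_of_hasEigenvector hdec hf hinj hv).resolve_left ?_
  · intro t ht
    obtain ⟨r, s, rfl⟩ := Submodule.mem_span_pair.mp ht
    exact Submodule.mem_span_pair.mpr
      ⟨0, r, by simp [(apply_apply_eq_zero_and_add_eq_self hdec hf hinj v).1]⟩
  · exact fun h => hv.2 (Submodule.span_eq_bot.mp h v (Set.mem_insert v _))

theorem exists_basis_J2 [FiniteDimensional K V] [FiniteDimensional K W] (hs : IsDStable f g)
    (hf : IsNilpotent f) (hW : finrank K W = 1) (hV : finrank K V = 2) :
    ∃ (b₁ : Basis (Fin 2) K V) (b₂ : Basis (Fin 1) K W),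
      LinearMap.toMatrix b₁ b₁ f = J2 K ∧ LinearMap.toMatrix b₂ b₁ g = aInf K := by
  let b₂ := finBasisOfFinrankEq K W hW
  have hf2 : f ^ 2 = 0 := hV ▸ Module.End.pow_finrank_eq_zero_of_isNilpotent hf
  have hff (x : V) : f (f x) = 0 := by simpa [pow_two] using congr($hf2 x)
  have hind := linearIndependent_pow_apply (n := 1) (φ := f) (x := g (b₂ 0)) (by simp [hf2])
    (by simpa using hs.apply_ne_zero (by omega) (b₂.ne_zero 0))
  let b₁ := basisOfLinearIndependentOfCardEqFinrank hind (by simp [hV])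
  have hb₁ : ∀ i, b₁ i = (f ^ (i : ℕ)) (g (b₂ 0)) := fun i => by
    simp [b₁, coe_basisOfLinearIndependentOfCardEqFinrank]
  refine ⟨b₁, b₂, LinearMap.toMatrix_eq_of_apply_basis fun j => ?_,
    LinearMap.toMatrix_eq_of_apply_basis fun j => ?_⟩
  · fin_cases j <;> simp [hb₁, J2, hff]
  · fin_cases j
    simp [hb₁, aInf]

theorem exists_basis_J4 [IsAlgClosed K] [FiniteDimensional K V] [FiniteDimensional K W]
    (hs : IsDStable f g) (hf : f ^ 4 = 0) (hW : 1 < finrank K W)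
    (hdim : finrank K V = 2 * finrank K W) :
    finrank K W = 2 ∧ ∃ (lam : K) (b₁ : Basis (Fin 4) K V) (b₂ : Basis (Fin 2) K W),
      LinearMap.toMatrix b₁ b₁ f = J4 K ∧ LinearMap.toMatrix b₂ b₁ g = Aα K ![lam, 1] := by
  have hinj (w : W) (h : f (f (g w)) = 0) : w = 0 := by_contra fun hw =>
    hs.apply_apply_ne_zero hW hw h
  obtain ⟨a, c, hdec⟩ := exists_apply_eq_add hf hinj hdim
  have : Nontrivial W := Module.nontrivial_of_finrank_pos (R := K) (by omega)
  obtain ⟨ν, hν⟩ := c.exists_eigenvalue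
  obtain ⟨v, hv⟩ := hν.exists_hasEigenvector
  have hav := apply_ne_zero_of_hasEigenvector hdec hf hinj hv
  have hW2 : finrank K W = 2 := by
    have := finrank_span_pair_le (K := K) v (a v)
    rw [hs.span_pair_eq_top_of_hasEigenvector hf hinj hdec hv, finrank_top] at this
    omega
  have hind₂ := linearIndependent_pow_apply (n := 1) (φ := a) (x := v)
    (by simp [pow_two, (apply_apply_eq_zero_and_add_eq_self hdec hf hinj v).1])
    (by simpa using hav)
  have hind₁ := linearIndependent_pow_apply (n := 3) (φ := f) (x := g v)
    (by simpa [pow_succ] using apply_four_eq_zero hf (g v))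
    (by simpa [pow_succ, apply_apply_apply_eq hdec hf] using hs.apply_apply_ne_zero hW hav)
  let b₁ := basisOfLinearIndependentOfCardEqFinrank hind₁ (by simp [hdim, hW2])
  let b₂ := basisOfLinearIndependentOfCardEqFinrank hind₂ (by simp [hW2])
  have hb₁ : ∀ i, b₁ i = (f ^ (i : ℕ)) (g v) := fun i => by
    simp [b₁, coe_basisOfLinearIndependentOfCardEqFinrank]
  have hb₂ : ∀ i, b₂ i = (a ^ (i : ℕ)) v := fun i => by
    simp [b₂, coe_basisOfLinearIndependentOfCardEqFinrank]
  have hgav : g (a v) = f (g v) + (-ν) • f (f (g v)) := by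
    have h := hdec v
    rw [hv.apply_eq_smul, map_smul, map_smul, map_smul] at h
    rw [neg_smul, ← sub_eq_add_neg, eq_sub_iff_add_eq, ← h]
  refine ⟨hW2, -ν, b₁, b₂, LinearMap.toMatrix_eq_of_apply_basis fun j => ?_,
    LinearMap.toMatrix_eq_of_apply_basis fun j => ?_⟩
  · fin_cases j <;> simp [hb₁, J4, Fin.sum_univ_four, pow_succ, apply_four_eq_zero hf]
  · fin_cases j <;> simp [hb₁, hb₂, Aα, Fin.sum_univ_four, hgav, pow_succ]

end IsDStable

end Stability

theorem stmt_11 [IsAlgClosed K]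
    (d1 d2 : ℕ) (hne : ¬(d1 = 0 ∧ d2 = 0))
    (E : Matrix (Fin d1) (Fin d1) K) (hE : E ^ 4 = 0)
    (B : Matrix (Fin d1) (Fin d2) K)
    (hdim : d1 = 2 * d2)
    (hstab : ∀ (U1 : Submodule K (Fin d1 → K)) (U2 : Submodule K (Fin d2 → K)),
      (∀ x ∈ U1, E.mulVec x ∈ U1) → (∀ y ∈ U2, B.mulVec y ∈ U1) →
      ¬(U1 = ⊥ ∧ U2 = ⊥) → ¬(U1 = ⊤ ∧ U2 = ⊤) →
      2 * Module.finrank K U2 < Module.finrank K U1) :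
    ((d1 = 2 ∧ d2 = 1) ∨ (d1 = 4 ∧ d2 = 2))
    ∧ ((∃ (e1 : (Fin d1 → K) ≃ₗ[K] (Fin 2 → K)) (e2 : (Fin d2 → K) ≃ₗ[K] (Fin 1 → K)),
          (∀ x, e1 (E.mulVec x) = (J2 K).mulVec (e1 x)) ∧
          (∀ y, e1 (B.mulVec y) = (aInf K).mulVec (e2 y)))
      ∨ (∃ (lam : K) (e1 : (Fin d1 → K) ≃ₗ[K] (Fin 4 → K))
            (e2 : (Fin d2 → K) ≃ₗ[K] (Fin 2 → K)),
          (∀ x, e1 (E.mulVec x) = (J4 K).mulVec (e1 x)) ∧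
          (∀ y, e1 (B.mulVec y) = (Aα K ![lam, 1]).mulVec (e2 y)))) := by
  have hs : IsDStable E.mulVecLin B.mulVecLin := hstab
  have hf : E.mulVecLin ^ 4 = 0 := by
    rw [← Matrix.toLin'_apply', ← Matrix.toLin'_pow, hE, map_zero]
  rcases (show d2 = 1 ∨ 1 < d2 by omega) with rfl | hd2
  · obtain ⟨b₁, b₂, hJ, hα⟩ := hs.exists_basis_J2 ⟨4, hf⟩ (by simp) (by simp [hdim])
    exact ⟨.inl ⟨hdim, rfl⟩, .inl ⟨b₁.equivFun, b₂.equivFun,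
      Module.Basis.equivFun_apply_eq_mulVec hJ, Module.Basis.equivFun_apply_eq_mulVec hα⟩⟩
  · obtain ⟨hW, lam, b₁, b₂, hJ, hα⟩ := hs.exists_basis_J4 hf (by simpa) (by simp [hdim])
    rw [finrank_fin_fun] at hW
    exact ⟨.inr ⟨by omega, hW⟩, .inr ⟨lam, b₁.equivFun, b₂.equivFun,
      Module.Basis.equivFun_apply_eq_mulVec hJ, Module.Basis.equivFun_apply_eq_mulVec hα⟩⟩

end
end

section
/- Let Γ be a valued quiver with symmetrizer c and let Q̄ be its unfolded quiver with vertex set {(i,k) : i ∈ Γ₀, k ∈ ℤ/c_i} and arrows α^{(g)}_{(j,l),(i,k)} for each arrow of Γ whenever k ≡ l mod gcd(c_i,c_j). Define Π: ℤΓ₀ → ℤQ̄₀ by Π(α_i) = Σ_{k∈ℤ/c_i} e_{(i,k)}. Then Π is an isometry for the Ringel forms: ⟨Π(v), Π(w)⟩_{Q̄} = ⟨v,w⟩_Γ for all v,w ∈ ℤΓ₀. -/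
/-!
Since `Π v` is constant on each fibre `{(i, k) : k ∈ ℤ/c_i}`, the diagonal part of the form of
`Q̄` picks up a factor `c_i`, and an arrow `i → j` of `Γ` contributes `g_{ji}` times the number of
pairs `(k, l) ∈ ℤ/c_i × ℤ/c_j` with `k ≡ l mod gcd(c_i, c_j)`, which is `lcm(c_i, c_j)`.
Symmetrizability `c_i ν_{ij} = c_j ν_{ji}` gives `gcd(ν_{ij}, ν_{ji}) · lcm(c_i, c_j) = c_i ν_{ij}`.
-/

open Finset

theorem Nat.count_modEq_of_dvd {r b : ℕ} (hr : 0 < r) (hrb : r ∣ b) (v : ℕ) :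
    b.count (· ≡ v [MOD r]) = b / r := by
  simp [Nat.count_modEq_card _ hr, Nat.mod_eq_zero_of_dvd hrb]

theorem sum_sum_ite_mod_gcd_eq_lcm (R : Type*) [NonAssocSemiring R] (a b : ℕ) :
    ∑ k : Fin a, ∑ l : Fin b,
      (if (k : ℕ) % Nat.gcd a b = (l : ℕ) % Nat.gcd a b then (1 : R) else 0) = Nat.lcm a b := by
  rcases (Nat.gcd a b).eq_zero_or_pos with hd | hd
  · obtain ⟨rfl, rfl⟩ := Nat.gcd_eq_zero_iff.mp hd
    simp
  have hrow : ∀ k : ℕ, ∑ l : Fin b,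
      (if k % Nat.gcd a b = (l : ℕ) % Nat.gcd a b then (1 : R) else 0) = (b / Nat.gcd a b : ℕ) := by
    intro k
    rw [Fin.sum_univ_eq_sum_range
        (fun l => if k % Nat.gcd a b = l % Nat.gcd a b then (1 : R) else 0),
      sum_boole, ← Nat.count_eq_card_filter_range]
    simp_rw [eq_comm (a := k % _)]
    rw [← Nat.count_modEq_of_dvd hd (Nat.gcd_dvd_right a b) k]
    rfl
  simp only [hrow, sum_const, card_univ, Fintype.card_fin, nsmul_eq_mul]
  rw [Nat.lcm, Nat.mul_div_assoc _ (Nat.gcd_dvd_right a b), Nat.cast_mul]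

theorem Nat.gcd_mul_lcm_eq_of_mul_eq_mul {c₁ c₂ ν₁₂ ν₂₁ : ℕ} (h : c₁ * ν₁₂ = c₂ * ν₂₁) :
    Nat.gcd ν₁₂ ν₂₁ * Nat.lcm c₁ c₂ = c₁ * ν₁₂ := by
  rcases (Nat.gcd c₁ c₂).eq_zero_or_pos with hd | hd
  · simp [(Nat.gcd_eq_zero_iff.mp hd).1]
  have hg : Nat.gcd ν₁₂ ν₂₁ * c₂ = ν₁₂ * Nat.gcd c₁ c₂ := by
    rw [← Nat.gcd_mul_right, mul_comm ν₂₁, ← h, mul_comm c₁, Nat.gcd_mul_left, Nat.gcd_comm]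
  refine Nat.eq_of_mul_eq_mul_right hd ?_
  calc Nat.gcd ν₁₂ ν₂₁ * Nat.lcm c₁ c₂ * Nat.gcd c₁ c₂
      = Nat.gcd ν₁₂ ν₂₁ * c₂ * c₁ := by rw [mul_assoc, mul_comm (Nat.lcm _ _), Nat.gcd_mul_lcm]; ring
    _ = c₁ * ν₁₂ * Nat.gcd c₁ c₂ := by rw [hg]; ring

theorem stmt_17_general (n : ℕ)
    (Ω : Finset (Fin n × Fin n)) (ν : Fin n × Fin n → ℕ) (c : Fin n → ℕ)
    (hsym : ∀ a ∈ Ω, c a.1 * ν a = c a.2 * ν (a.2, a.1))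
    (g : Fin n × Fin n → ℕ)
    (hg : ∀ a, g a = Nat.gcd (ν a) (ν (a.2, a.1)))
    (unfold : (Fin n → ℤ) → ((i : Fin n) × Fin (c i)) → ℤ)
    (hunfold : ∀ v i k, unfold v ⟨i, k⟩ = v i)
    (RΓ : (Fin n → ℤ) → (Fin n → ℤ) → ℤ)
    (hRΓ : ∀ v w, RΓ v w = (∑ i, (c i : ℤ) * v i * w i)
        - ∑ a ∈ Ω, (c a.1 : ℤ) * (ν a : ℤ) * v a.1 * w a.2)
    (RQ : (((i : Fin n) × Fin (c i)) → ℤ) → (((i : Fin n) × Fin (c i)) → ℤ) → ℤ)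
    (hRQ : ∀ x y, RQ x y = (∑ p, x p * y p)
      - ∑ a ∈ Ω, (g a : ℤ) * ∑ k : Fin (c a.1), ∑ l : Fin (c a.2),
          (if (k : ℕ) % Nat.gcd (c a.1) (c a.2) = (l : ℕ) % Nat.gcd (c a.1) (c a.2)
            then 1 else 0)
            * x ⟨a.1, k⟩ * y ⟨a.2, l⟩) :
    ∀ v w, RQ (unfold v) (unfold w) = RΓ v w := by
  intro v w
  rw [hRQ, hRΓ]
  congr 1
  · simp [Fintype.sum_sigma, hunfold, mul_assoc]
  · refine sum_congr rfl fun a ha => ?_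
    simp_rw [hunfold, mul_assoc, ← sum_mul, sum_sum_ite_mod_gcd_eq_lcm, ← mul_assoc]
    rw [hg, ← Nat.cast_mul, Nat.gcd_mul_lcm_eq_of_mul_eq_mul (hsym a ha), Nat.cast_mul]

/-- The unfolding map Π : ℤΓ₀ → ℤQ̄₀, Π(α_i) = Σ_{k ∈ ℤ/c_i} e_{(i,k)},
is an isometry from the Ringel form of a valued quiver Γ (with valuation ν and
symmetrizer c) to the Ringel form of its unfolded ordinary quiver Q̄, whose vertices
are pairs (i,k), k ∈ ℤ/c_i (modelled by Fin (c i)), and which has g_{ji} = gcd(ν_{ji},ν_{ij})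
arrows (i,k) → (j,l) for each arrow i → j of Γ whenever k ≡ l mod gcd(c_i,c_j). -/
theorem stmt_17 (n : ℕ)
    (Ω : Finset (Fin n × Fin n)) (ν : Fin n × Fin n → ℕ) (c : Fin n → ℕ)
    (hc : ∀ i, 0 < c i)
    (hloop : ∀ a ∈ Ω, a.1 ≠ a.2)
    (hsym : ∀ a ∈ Ω, c a.1 * ν a = c a.2 * ν (a.2, a.1))
    (g : Fin n × Fin n → ℕ)
    (hg : ∀ a, g a = Nat.gcd (ν a) (ν (a.2, a.1)))
    (unfold : (Fin n → ℤ) → ((i : Fin n) × Fin (c i)) → ℤ)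
    (hunfold : ∀ v i k, unfold v ⟨i, k⟩ = v i)
    (RΓ : (Fin n → ℤ) → (Fin n → ℤ) → ℤ)
    (hRΓ : ∀ v w, RΓ v w = (∑ i, (c i : ℤ) * v i * w i)
        - ∑ a ∈ Ω, (c a.1 : ℤ) * (ν a : ℤ) * v a.1 * w a.2)
    (RQ : (((i : Fin n) × Fin (c i)) → ℤ) → (((i : Fin n) × Fin (c i)) → ℤ) → ℤ)
    (hRQ : ∀ x y, RQ x y = (∑ p, x p * y p)
      - ∑ a ∈ Ω, (g a : ℤ) * ∑ k : Fin (c a.1), ∑ l : Fin (c a.2),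
          (if (k : ℕ) % Nat.gcd (c a.1) (c a.2) = (l : ℕ) % Nat.gcd (c a.1) (c a.2)
            then 1 else 0)
            * x ⟨a.1, k⟩ * y ⟨a.2, l⟩) :
    ∀ v w, RQ (unfold v) (unfold w) = RΓ v w :=
  stmt_17_general n Ω ν c hsym g hg unfold hunfold RΓ hRΓ RQ hRQ
end
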